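/- arXiv:1403.2281 — 4 statements merged into one kernel-verified Lean document; each statement's English description precedes it below -/
import Mathlib

section
/- For any entire function F : ℂ → ℂ that is analytic on the strip -1 ≤ Im(x) ≤ 0 and such that F(a·x·(x+i))/cosh(π x) is integrable over the real line (with sufficient decay as Re(x) → ±∞), one has ∫_{-∞}^{∞} F(a·x·(x+i))/cosh(π x) dx = F(a/4). -/
/-!
Put `Ψ z = (g z - g (-i/2)) / cosh (π z)` with `g z = F (a z (z + i))`. In the strip
`-1 ≤ Im z ≤ 0` the only zero of `cosh (π z)` is the simple zero `-i/2`, so `Ψ` is holomorphic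
there. Since `cosh (π (z - i)) = -cosh (π z)` and `g (x - i) = g (-x)`, the values of `Ψ` on the
line `Im z = -1` are `Ψ (x - i) = -Ψ (-x)`; shifting the line of integration (the decay kills
the vertical sides) gives `∫ Ψ = -∫ Ψ`, i.e. `∫ Ψ = 0`. Together with `∫ sech (π x) dx = 1` this
is the claim, because `g (-i/2) = F (a/4)`.
-/

open Complex MeasureTheory Filter Topology Set
open scoped Real Interval

namespace Real

theorem hasDerivAt_arctan_sinh (x : ℝ) :
    HasDerivAt (fun t => arctan (sinh t)) (cosh x)⁻¹ x := by
  refine ((hasDerivAt_arctan (sinh x)).comp x (hasDerivAt_sinh x)).congr_deriv ?_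
  rw [← cosh_sq']
  field_simp [(cosh_pos x).ne']

theorem inv_cosh_le (x : ℝ) : (cosh x)⁻¹ ≤ 4 * (1 + x ^ 2)⁻¹ := by
  have hexp := quadratic_le_exp_of_nonneg (abs_nonneg x)
  have hcosh : exp |x| / 2 ≤ cosh x := by
    rw [← cosh_abs, cosh_eq]
    linarith [exp_pos (-|x|)]
  rw [sq_abs] at hexp
  rw [← div_eq_mul_inv, inv_le_comm₀ (cosh_pos x) (by positivity), inv_div]
  nlinarith [abs_nonneg x]

theorem integrable_inv_cosh : Integrable fun x : ℝ => (cosh x)⁻¹ :=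
  (integrable_inv_one_add_sq.const_mul 4).mono'
    (continuous_cosh.inv₀ fun x => (cosh_pos x).ne').aestronglyMeasurable
    (ae_of_all _ fun x => by
      rw [norm_of_nonneg (inv_pos.2 (cosh_pos x)).le]
      exact inv_cosh_le x)

theorem integral_inv_cosh : ∫ x : ℝ, (cosh x)⁻¹ = π := by
  rw [integral_of_hasDerivAt_of_tendsto hasDerivAt_arctan_sinh integrable_inv_cosh
    ((tendsto_arctan_atBot.mono_right nhdsWithin_le_nhds).comp sinhOrderIso.tendsto_atBot)
    ((tendsto_arctan_atTop.mono_right nhdsWithin_le_nhds).comp sinhOrderIso.tendsto_atTop)]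
  ring

end Real

theorem integrable_inv_cosh_pi_mul :
    Integrable fun x : ℝ => (Complex.cosh (π * x))⁻¹ := by
  simp only [← ofReal_mul, ← ofReal_cosh, ← ofReal_inv]
  exact (Real.integrable_inv_cosh.comp_mul_left' Real.pi_ne_zero).ofReal

theorem integral_inv_cosh_pi_mul : ∫ x : ℝ, (Complex.cosh (π * x))⁻¹ = 1 := by
  simp only [← ofReal_mul, ← ofReal_cosh, ← ofReal_inv, integral_complex_ofReal,
    Measure.integral_comp_mul_left (fun x => (Real.cosh x)⁻¹), Real.integral_inv_cosh]
  rw [abs_of_pos (inv_pos.2 Real.pi_pos), smul_eq_mul, inv_mul_cancel₀ Real.pi_ne_zero, ofReal_one]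

namespace Complex

theorem exp_abs_re_div_four_le_norm_cosh {w : ℂ} (hw : 1 ≤ |w.re|) :
    Real.exp |w.re| / 4 ≤ ‖cosh w‖ := by
  have htwo : 2 ≤ Real.exp |w.re| := by linarith [Real.add_one_le_exp |w.re|]
  have hneg : Real.exp (-|w.re|) ≤ 1 := Real.exp_le_one_iff.2 (by linarith)
  have hdiff : Real.exp |w.re| - Real.exp (-|w.re|) ≤ ‖exp w + exp (-w)‖ := by
    have h := abs_norm_sub_norm_le (exp w) (-exp (-w))
    rw [sub_neg_eq_add, norm_neg, norm_exp, norm_exp, neg_re] at h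
    have hsinh := Real.abs_sinh w.re
    rw [Real.sinh_eq, Real.sinh_eq, abs_div, abs_two] at hsinh
    linarith
  rw [cosh, norm_div, RCLike.norm_ofNat]
  linarith

theorem cosh_pi_mul_ne_zero {z : ℂ} (hz : z.im ∈ [[-1, 0]]) (hc : z ≠ -I / 2) :
    cosh (π * z) ≠ 0 := by
  rw [← cos_mul_I, ne_eq, cos_eq_zero_iff]
  rintro ⟨k, hk⟩
  have hz' : z = -((2 * k + 1) / 2) * I := by
    have hπ : (π : ℂ) ≠ 0 := ofReal_ne_zero.2 Real.pi_ne_zero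
    apply mul_left_cancel₀ hπ
    linear_combination (-I) * hk + (π * z) * I_sq
  have him : z.im = -((2 * k + 1) / 2) := by
    rw [hz']; simp
  rw [uIcc_of_le (by norm_num), mem_Icc, him] at hz
  have hk0 : k = 0 := by
    have h1 : (0 : ℤ) ≤ 2 * k + 1 := by exact_mod_cast (by linarith : (0 : ℝ) ≤ 2 * k + 1)
    have h2 : 2 * k + 1 ≤ (2 : ℤ) := by exact_mod_cast (by linarith : (2 * k + 1 : ℝ) ≤ 2)
    omega
  exact hc (by rw [hz', hk0]; push_cast; ring)

theorem hasDerivAt_cosh_pi_mul_neg_I_div_two :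
    HasDerivAt (fun z => cosh (π * z)) (-π * I) (-I / 2) := by
  refine ((hasDerivAt_cosh _).comp _ ((hasDerivAt_id _).const_mul (π : ℂ))).congr_deriv ?_
  have h : (π : ℂ) * (-I / 2) = (-(π / 2) : ℝ) * I := by push_cast; ring
  rw [id, mul_one, h, sinh_mul_I, ← ofReal_sin, Real.sin_neg, Real.sin_pi_div_two]
  push_cast; ring

theorem cosh_pi_mul_neg_I_div_two : cosh (π * (-I / 2)) = 0 := by
  have h : (π : ℂ) * (-I / 2) = (-(π / 2) : ℝ) * I := by push_cast; ring
  rw [h, cosh_mul_I, ← ofReal_cos, Real.cos_neg, Real.cos_pi_div_two, ofReal_zero]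

end Complex

theorem dslope_div_dslope_of_ne {𝕜 : Type*} [NontriviallyNormedField 𝕜] {f h : 𝕜 → 𝕜}
    {c z : 𝕜} (hc : h c = 0) (hz : z ≠ c) :
    (dslope f c / dslope h c) z = (f z - f c) / h z := by
  simp only [Pi.div_apply, dslope_of_ne _ hz, slope_def_field, hc, sub_zero]
  rw [div_div_div_cancel_right₀ (sub_ne_zero.2 hz)]

theorem differentiableOn_dslope_div_dslope {f h : ℂ → ℂ} {s : Set ℂ} {c : ℂ} (hs : s ∈ 𝓝 c)
    (hf : DifferentiableOn ℂ f s) (hh : DifferentiableOn ℂ h s) (hc : h c = 0)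
    (hderiv : deriv h c ≠ 0) (hne : ∀ z ∈ s, z ≠ c → h z ≠ 0) :
    DifferentiableOn ℂ (dslope f c / dslope h c) s := by
  refine ((differentiableOn_dslope hs).2 hf).div ((differentiableOn_dslope hs).2 hh) ?_
  intro z hz
  rcases eq_or_ne z c with rfl | hzc
  · rwa [dslope_same]
  · rw [dslope_of_ne _ hzc, slope_def_field, hc, sub_zero]
    exact div_ne_zero (hne z hz hzc) (sub_ne_zero.2 hzc)

theorem tendsto_intervalIntegral_vertical_cocompact {E : Type*} [NormedAddCommGroup E]
    [NormedSpace ℂ E] {Φ : ℂ → E} {b t : ℝ}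
    (hdecay : ∀ ε > 0, ∃ M : ℝ, ∀ z ∈ univ ×ℂ [[b, t]], M ≤ |z.re| → ‖Φ z‖ ≤ ε) :
    Tendsto (fun x : ℝ => ∫ y in b..t, Φ (x + y * I)) (cocompact ℝ) (𝓝 0) := by
  rw [Metric.tendsto_nhds]
  intro ε hε
  obtain ⟨M, hM⟩ := hdecay (ε / (|t - b| + 1)) (by positivity)
  filter_upwards [tendsto_norm_cocompact_atTop.eventually_ge_atTop M] with x hx
  rw [dist_zero_right]
  calc ‖∫ y in b..t, Φ (x + y * I)‖ ≤ ε / (|t - b| + 1) * |t - b| :=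
        intervalIntegral.norm_integral_le_of_norm_le_const fun y hy =>
          hM _ (by simpa [mem_reProdIm] using uIoc_subset_uIcc hy) (by simpa using hx)
    _ < ε := by
        rw [div_mul_eq_mul_div, div_lt_iff₀ (by positivity)]
        nlinarith [abs_nonneg (t - b)]

theorem integral_add_mul_I_eq_of_differentiableOn_strip {E : Type*} [NormedAddCommGroup E]
    [NormedSpace ℂ E] {Φ : ℂ → E} {b t : ℝ}
    (hΦ : DifferentiableOn ℂ Φ (univ ×ℂ [[b, t]]))
    (hdecay : ∀ ε > 0, ∃ M : ℝ, ∀ z ∈ univ ×ℂ [[b, t]], M ≤ |z.re| → ‖Φ z‖ ≤ ε)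
    (hb : Integrable fun x : ℝ => Φ (x + b * I)) (ht : Integrable fun x : ℝ => Φ (x + t * I)) :
    ∫ x : ℝ, Φ (x + b * I) = ∫ x : ℝ, Φ (x + t * I) := by
  have hrect : ∀ R : ℝ, (∫ x in -R..R, Φ (x + b * I)) - (∫ x in -R..R, Φ (x + t * I)) +
      I • (∫ y in b..t, Φ (R + y * I)) - I • (∫ y in b..t, Φ ((-R : ℝ) + y * I)) = 0 := fun R => by
    simpa using integral_boundary_rect_eq_zero_of_differentiableOn Φ ((-R : ℝ) + b * I) (R + t * I)
      (hΦ.mono (reProdIm_subset_iff.2 (prod_mono (subset_univ _) (by simp))))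
  have hside := tendsto_intervalIntegral_vertical_cocompact hdecay
  have hlim := (((intervalIntegral_tendsto_integral hb tendsto_neg_atTop_atBot tendsto_id).sub
    (intervalIntegral_tendsto_integral ht tendsto_neg_atTop_atBot tendsto_id)).add
    ((hside.comp (tendsto_id.mono_right atTop_le_cocompact)).const_smul I)).sub
    ((hside.comp (tendsto_neg_atTop_atBot.mono_right atBot_le_cocompact)).const_smul I)
  simp only [smul_zero, add_zero, sub_zero] at hlim
  exact sub_eq_zero.1 (tendsto_nhds_unique hlim (tendsto_const_nhds.congr fun R => (hrect R).symm))

theorem norm_div_cosh_pi_mul_le (w : ℂ) {z : ℂ} (hz : 1 ≤ |z.re|) :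
    ‖w / cosh (π * z)‖ ≤ 4 * ‖w‖ * Real.exp (-π * |z.re|) := by
  have hre : |(π * z).re| = π * |z.re| := by
    rw [re_ofReal_mul, abs_mul, abs_of_pos Real.pi_pos]
  have hcosh := exp_abs_re_div_four_le_norm_cosh (w := π * z)
    (by rw [hre]; nlinarith [Real.pi_gt_three])
  rw [hre] at hcosh
  rw [norm_div, div_le_iff₀ ((by positivity : (0 : ℝ) < _).trans_le hcosh), neg_mul, Real.exp_neg]
  calc ‖w‖ = 4 * ‖w‖ * (Real.exp (π * |z.re|))⁻¹ * (Real.exp (π * |z.re|) / 4) := by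
        field_simp
    _ ≤ 4 * ‖w‖ * (Real.exp (π * |z.re|))⁻¹ * ‖cosh (π * z)‖ := by gcongr

theorem decay_sub_div_cosh_pi_mul {g : ℂ → ℂ} {s : Set ℂ} (C : ℂ)
    (hg : ∀ ε > 0, ∃ M : ℝ, ∀ z ∈ s, M ≤ |z.re| →
      ‖g z‖ * Real.exp (-π * |z.re|) * |z.re| ≤ ε) :
    ∀ ε > 0, ∃ M : ℝ, ∀ z ∈ s, M ≤ |z.re| → ‖(g z - C) / cosh (π * z)‖ ≤ ε := by
  intro ε hε
  obtain ⟨M₁, hM₁⟩ := hg (ε / 8) (by positivity)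
  have hC : Tendsto (fun r : ℝ => 4 * ‖C‖ * Real.exp (-π * r)) atTop (𝓝 0) := by
    simpa using (Real.tendsto_exp_atBot.comp
      (tendsto_id.const_mul_atTop_of_neg (neg_lt_zero.2 Real.pi_pos))).const_mul (4 * ‖C‖)
  obtain ⟨M₂, hM₂⟩ := eventually_atTop.1 (hC.eventually (ge_mem_nhds (half_pos hε)))
  refine ⟨max 1 (max M₁ M₂), fun z hz hM => ?_⟩
  simp only [max_le_iff] at hM
  obtain ⟨h1, hM₁z, hM₂z⟩ := hM
  have hg_le : ‖g z‖ * Real.exp (-π * |z.re|) ≤ ε / 8 :=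
    (le_mul_of_one_le_right (by positivity) h1).trans (hM₁ z hz hM₁z)
  calc ‖(g z - C) / cosh (π * z)‖ ≤ 4 * ‖g z - C‖ * Real.exp (-π * |z.re|) :=
        norm_div_cosh_pi_mul_le _ h1
    _ ≤ 4 * (‖g z‖ * Real.exp (-π * |z.re|)) + 4 * ‖C‖ * Real.exp (-π * |z.re|) := by
        nlinarith [norm_sub_le (g z) C, Real.exp_pos (-π * |z.re|)]
    _ ≤ ε := by linarith [hM₂ _ hM₂z]

section CoshQuotient

/-- `(g z - g (-I/2)) / cosh (π z)`, with its removable singularity at `-I/2` filled in. -/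
noncomputable def subDivCoshPiMul (g : ℂ → ℂ) : ℂ → ℂ :=
  dslope g (-I / 2) / dslope (fun z => cosh (π * z)) (-I / 2)

variable {g : ℂ → ℂ}

theorem subDivCoshPiMul_of_ne {z : ℂ} (hz : z ≠ -I / 2) :
    subDivCoshPiMul g z = (g z - g (-I / 2)) / cosh (π * z) :=
  dslope_div_dslope_of_ne (h := fun z => cosh (π * z)) cosh_pi_mul_neg_I_div_two hz

theorem subDivCoshPiMul_of_im_ne {z : ℂ} (hz : z.im ≠ -1 / 2) :
    subDivCoshPiMul g z = (g z - g (-I / 2)) / cosh (π * z) :=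
  subDivCoshPiMul_of_ne (ne_of_apply_ne im (by simpa using hz))

theorem differentiableOn_subDivCoshPiMul (hg : DifferentiableOn ℂ g (univ ×ℂ [[-1, 0]])) :
    DifferentiableOn ℂ (subDivCoshPiMul g) (univ ×ℂ [[-1, 0]]) := by
  have hstrip_nhds : univ ×ℂ [[-1, 0]] ∈ 𝓝 (-I / 2) := by
    rw [uIcc_of_le (by norm_num)]
    exact inter_mem univ_mem (continuous_im.continuousAt.preimage_mem_nhds
      (Icc_mem_nhds (by norm_num) (by norm_num)))
  exact differentiableOn_dslope_div_dslope hstrip_nhds hg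
    (differentiable_cosh.comp (differentiable_id.const_mul _)).differentiableOn
    cosh_pi_mul_neg_I_div_two
    (by simp [hasDerivAt_cosh_pi_mul_neg_I_div_two.deriv, Real.pi_ne_zero])
    (fun z hz => cosh_pi_mul_ne_zero hz.2)

theorem decay_subDivCoshPiMul {s : Set ℂ}
    (hdecay : ∀ ε > 0, ∃ M : ℝ, ∀ z ∈ s, M ≤ |z.re| →
      ‖g z‖ * Real.exp (-π * |z.re|) * |z.re| ≤ ε) :
    ∀ ε > 0, ∃ M : ℝ, ∀ z ∈ s, M ≤ |z.re| → ‖subDivCoshPiMul g z‖ ≤ ε := by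
  intro ε hε
  obtain ⟨M, hM⟩ := decay_sub_div_cosh_pi_mul (g (-I / 2)) hdecay ε hε
  refine ⟨max M 1, fun z hz hzM => ?_⟩
  have hre : z.re ≠ 0 := fun h => by
    have := (le_max_right M 1).trans hzM
    norm_num [h] at this
  rw [subDivCoshPiMul_of_ne (ne_of_apply_ne re (by simpa using hre))]
  exact hM z hz ((le_max_left M 1).trans hzM)

theorem subDivCoshPiMul_sub_I (hsymm : ∀ x : ℝ, g (x - I) = g (-x)) (x : ℝ) :
    subDivCoshPiMul g (x + (-1 : ℝ) * I) = -subDivCoshPiMul g (-x : ℝ) := by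
  rw [subDivCoshPiMul_of_im_ne (by norm_num), subDivCoshPiMul_of_im_ne (by norm_num),
    show (x : ℂ) + (-1 : ℝ) * I = x - I by push_cast; ring, mul_sub, cosh_sub_pi_mul_I, hsymm,
    ofReal_neg, mul_neg, cosh_neg, div_neg]

theorem integral_div_cosh_pi_mul_eq (hg : DifferentiableOn ℂ g (univ ×ℂ [[-1, 0]]))
    (hsymm : ∀ x : ℝ, g (x - I) = g (-x))
    (hdecay : ∀ ε > 0, ∃ M : ℝ, ∀ z ∈ univ ×ℂ [[-1, 0]], M ≤ |z.re| →
      ‖g z‖ * Real.exp (-π * |z.re|) * |z.re| ≤ ε)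
    (hint : Integrable fun x : ℝ => g x / cosh (π * x)) :
    ∫ x : ℝ, g x / cosh (π * x) = g (-I / 2) := by
  have hΨ_real : ∀ x : ℝ, subDivCoshPiMul g x =
      g x / cosh (π * x) - g (-I / 2) * (cosh (π * x))⁻¹ := fun x => by
    rw [subDivCoshPiMul_of_im_ne (by norm_num), sub_div, div_eq_mul_inv (g (-I / 2))]
  have hΨ_int : Integrable fun x : ℝ => subDivCoshPiMul g x := by
    simp only [hΨ_real]
    exact hint.sub (integrable_inv_cosh_pi_mul.const_mul _)
  have hzero : ∫ x : ℝ, subDivCoshPiMul g x = 0 := by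
    have hshift := integral_add_mul_I_eq_of_differentiableOn_strip
      (differentiableOn_subDivCoshPiMul hg) (decay_subDivCoshPiMul hdecay)
      (by simpa only [subDivCoshPiMul_sub_I hsymm] using hΨ_int.comp_neg.fun_neg)
      (by simpa using hΨ_int)
    simp only [subDivCoshPiMul_sub_I hsymm, integral_neg, ofReal_zero, zero_mul, add_zero,
      integral_neg_eq_self (fun x : ℝ => subDivCoshPiMul g x)] at hshift
    exact neg_eq_self.1 hshift
  simp only [hΨ_real] at hzero
  rwa [integral_sub hint (integrable_inv_cosh_pi_mul.const_mul _), integral_const_mul,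
    integral_inv_cosh_pi_mul, mul_one, sub_eq_zero] at hzero

end CoshQuotient

theorem master_theorem_cosh_general (F : ℂ → ℂ) (a : ℝ)
    (hstrip : DifferentiableOn ℂ (fun z : ℂ => F (a * z * (z + Complex.I)))
      {z : ℂ | -1 ≤ z.im ∧ z.im ≤ 0})
    (hint : Integrable (fun x : ℝ =>
      F (a * x * (x + Complex.I)) / Complex.cosh (Real.pi * x)))
    (hdecay : ∀ ε > 0, ∃ M : ℝ, ∀ z : ℂ, -1 ≤ z.im → z.im ≤ 0 → M ≤ |z.re| →
      ‖F (a * z * (z + Complex.I))‖ * Real.exp (-Real.pi * |z.re|) * |z.re| ≤ ε) :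
    ∫ x : ℝ, F (a * x * (x + Complex.I)) / Complex.cosh (Real.pi * x) = F (a / 4) := by
  have hstrip_eq : {z : ℂ | -1 ≤ z.im ∧ z.im ≤ 0} = univ ×ℂ [[-1, 0]] := by
    ext z
    simp [mem_reProdIm, uIcc_of_le]
  rw [integral_div_cosh_pi_mul_eq (hstrip_eq ▸ hstrip) (fun x => by congr 1; ring)
    (fun ε hε => (hdecay ε hε).imp fun M hM z hz => hM z (hstrip_eq ▸ hz).1 (hstrip_eq ▸ hz).2)
    hint]
  congr 1
  linear_combination (-(a : ℂ) / 4) * I_sq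

theorem master_theorem_cosh (F : ℂ → ℂ) (a : ℝ)
    (hF : Differentiable ℂ F)
    (hstrip : DifferentiableOn ℂ (fun z : ℂ => F (a * z * (z + Complex.I)))
      {z : ℂ | -1 ≤ z.im ∧ z.im ≤ 0})
    (hint : Integrable (fun x : ℝ =>
      F (a * x * (x + Complex.I)) / Complex.cosh (Real.pi * x)))
    (hdecay : ∀ ε > 0, ∃ M : ℝ, ∀ z : ℂ, -1 ≤ z.im → z.im ≤ 0 → M ≤ |z.re| →
      ‖F (a * z * (z + Complex.I))‖ * Real.exp (-Real.pi * |z.re|) * |z.re| ≤ ε) :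
    ∫ x : ℝ, F (a * x * (x + Complex.I)) / Complex.cosh (Real.pi * x) = F (a / 4) :=
  master_theorem_cosh_general F a hstrip hint hdecay
end

section
/- ∫_{0}^{∞} e^{-b v²} (cos(b v) + 2 v sin(b v)) / (4 v² + 1) dv = (π/4) e^{-b/4} for every real b ≥ 0. -/
open Real MeasureTheory

open Set Filter Topology

/-!
Let `F b = ∫₀^∞ f b v dv` with `f` the integrand. Differentiating under the integral sign,
`4 ∂_b f + f = exp (-b v²) (cos (b v) - 2 v sin (b v)) = b⁻¹ ∂_v (exp (-b v²) sin (b v))`,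
whose integral over `(0, ∞)` vanishes for `b > 0`. Hence `F' = -F / 4` on `(0, ∞)`, so
`F b = exp (-b / 4) F 0`, and `F 0 = ∫₀^∞ dv / (4 v² + 1) = π / 4`. Continuity of `F` at `0`
comes from the bound `|f b v| ≤ 2 / (1 + v²)`, uniform in `b ≥ 0`, which rests on
`|sin (b v)| ≤ b |v|`.
-/

theorem eq_exp_mul_of_hasDerivAt_eq_neg_mul {F : ℝ → ℝ} {k a b : ℝ}
    (hcont : ContinuousOn F (Ici a)) (hderiv : ∀ x ∈ Ioi a, HasDerivAt F (-k * F x) x)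
    (hab : a ≤ b) : F b = exp (-k * (b - a)) * F a := by
  rcases hab.eq_or_lt with rfl | hab
  · simp
  set G : ℝ → ℝ := fun x => exp (k * x) * F x
  have hG : ∀ x ∈ Ioo a b, HasDerivAt G 0 x := fun x hx => by
    refine (((hasDerivAt_id x).const_mul k).exp.mul (hderiv x hx.1)).congr_deriv ?_
    simp only [id]
    ring
  have hGc : ContinuousOn G (Icc a b) :=
    (continuous_exp.comp (continuous_const_mul k)).continuousOn.mul
      (hcont.mono Icc_subset_Ici_self)
  obtain ⟨c, -, hc⟩ := exists_hasDerivAt_eq_slope G (fun _ => 0) hab hGc hG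
  have hGab : exp (k * b) * F b = exp (k * a) * F a := by
    rw [eq_comm, div_eq_zero_iff, sub_eq_zero] at hc
    exact hc.resolve_right (sub_ne_zero.2 hab.ne')
  rw [show -k * (b - a) = k * a - k * b by ring, exp_sub, div_mul_eq_mul_div, ← hGab]
  field_simp

theorem integrable_one_add_abs_mul_exp_neg_mul_sq {c : ℝ} (hc : 0 < c) :
    Integrable fun v : ℝ => (1 + |v|) * exp (-c * v ^ 2) := by
  refine ((integrable_exp_neg_mul_sq hc).add (integrable_mul_exp_neg_mul_sq hc).norm).congr
    (ae_of_all _ fun v => ?_)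
  simp only [Pi.add_apply, norm_mul, Real.norm_eq_abs, abs_exp]
  ring

theorem integral_Ioi_deriv_exp_neg_mul_sq_mul_sin {b : ℝ} (hb : 0 < b) (c : ℝ) :
    ∫ v in Ioi 0, exp (-b * v ^ 2) * (c * cos (c * v) - 2 * b * v * sin (c * v)) = 0 := by
  have hderiv : ∀ v, HasDerivAt (fun v => exp (-b * v ^ 2) * sin (c * v))
      (exp (-b * v ^ 2) * (c * cos (c * v) - 2 * b * v * sin (c * v))) v := fun v => by
    have hexp := ((hasDerivAt_pow 2 v).const_mul (-b)).exp
    have hsin := ((hasDerivAt_id v).const_mul c).sin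
    refine (hexp.mul hsin).congr_deriv ?_
    simp only [id]
    ring
  have hint :
      Integrable fun v => exp (-b * v ^ 2) * (c * cos (c * v) - 2 * b * v * sin (c * v)) := by
    refine ((integrable_one_add_abs_mul_exp_neg_mul_sq hb).const_mul (|c| + 2 * b)).mono'
      (by fun_prop : Continuous _).aestronglyMeasurable (ae_of_all _ fun v => ?_)
    have hnum : |c * cos (c * v) - 2 * b * v * sin (c * v)| ≤ (|c| + 2 * b) * (1 + |v|) :=
      calc |c * cos (c * v) - 2 * b * v * sin (c * v)|
          ≤ |c| * |cos (c * v)| + 2 * b * |v| * |sin (c * v)| := by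
            simpa only [abs_mul, abs_two, abs_of_pos hb] using
              abs_sub (c * cos (c * v)) (2 * b * v * sin (c * v))
        _ ≤ |c| * 1 + 2 * b * |v| * 1 := by
            gcongr; exacts [abs_cos_le_one _, abs_sin_le_one _]
        _ ≤ (|c| + 2 * b) * (1 + |v|) := by nlinarith [abs_nonneg c, abs_nonneg v]
    rw [norm_mul, norm_of_nonneg (exp_pos _).le, Real.norm_eq_abs]
    calc exp (-b * v ^ 2) * |c * cos (c * v) - 2 * b * v * sin (c * v)|
        ≤ exp (-b * v ^ 2) * ((|c| + 2 * b) * (1 + |v|)) := by gcongr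
      _ = (|c| + 2 * b) * ((1 + |v|) * exp (-b * v ^ 2)) := by ring
  have hlim : Tendsto (fun v => exp (-b * v ^ 2) * sin (c * v)) atTop (𝓝 0) := by
    have hgauss : Tendsto (fun v : ℝ => exp (-b * v ^ 2)) atTop (𝓝 0) :=
      tendsto_exp_comp_nhds_zero.2
        ((tendsto_pow_atTop two_ne_zero).const_mul_atTop_of_neg (neg_neg_of_pos hb))
    refine squeeze_zero_norm (fun v => ?_) hgauss
    rw [norm_mul, norm_of_nonneg (exp_pos _).le]
    exact mul_le_of_le_one_right (exp_pos _).le (abs_sin_le_one _)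
  rw [integral_Ioi_of_hasDerivAt_of_tendsto' (fun v _ => hderiv v) hint.integrableOn hlim]
  simp

namespace ExpCosSinIntegral

noncomputable def integrand (b v : ℝ) : ℝ :=
  exp (-b * v ^ 2) * (cos (b * v) + 2 * v * sin (b * v)) / (4 * v ^ 2 + 1)

noncomputable def integrandDeriv (b v : ℝ) : ℝ :=
  exp (-b * v ^ 2) * (v ^ 2 * cos (b * v) - (v + 2 * v ^ 3) * sin (b * v)) / (4 * v ^ 2 + 1)

lemma continuous_uncurry_integrand : Continuous (Function.uncurry integrand) := by
  unfold integrand Function.uncurry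
  fun_prop (disch := intro; positivity)

lemma continuous_integrand (b : ℝ) : Continuous (integrand b) :=
  continuous_uncurry_integrand.comp (continuous_const.prodMk continuous_id)

lemma continuous_integrandDeriv (b : ℝ) : Continuous (integrandDeriv b) := by
  unfold integrandDeriv
  fun_prop (disch := intro; positivity)

lemma norm_integrand_le {b : ℝ} (hb : 0 ≤ b) (v : ℝ) :
    ‖integrand b v‖ ≤ 2 * (1 + v ^ 2)⁻¹ := by
  have hnum : |cos (b * v) + 2 * v * sin (b * v)| ≤ 1 + 2 * (b * v ^ 2) :=
    calc |cos (b * v) + 2 * v * sin (b * v)| ≤ |cos (b * v)| + |2 * v| * |sin (b * v)| := by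
          rw [← abs_mul]; exact abs_add_le _ _
      _ ≤ 1 + |2 * v| * |b * v| :=
          add_le_add (abs_cos_le_one _) (mul_le_mul_of_nonneg_left abs_sin_le_abs (abs_nonneg _))
      _ = 1 + 2 * (b * v ^ 2) := by
          rw [← abs_mul, show 2 * v * (b * v) = 2 * (b * v ^ 2) by ring,
            abs_of_nonneg (by positivity)]
  -- `1 + 2 x ≤ 2 (1 + x) ≤ 2 exp x` with `x = b v²`
  have hexp : exp (-b * v ^ 2) * (1 + 2 * (b * v ^ 2)) ≤ 2 := by
    have := add_one_le_exp (b * v ^ 2)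
    rw [neg_mul, exp_neg, inv_mul_le_iff₀ (exp_pos _)]
    nlinarith [mul_nonneg hb (sq_nonneg v)]
  calc ‖integrand b v‖
      = exp (-b * v ^ 2) * |cos (b * v) + 2 * v * sin (b * v)| / (4 * v ^ 2 + 1) := by
        rw [integrand, norm_div, norm_mul, norm_of_nonneg (exp_pos _).le, Real.norm_eq_abs,
          norm_of_nonneg (by positivity)]
    _ ≤ 2 / (4 * v ^ 2 + 1) := by
        gcongr
        exact (mul_le_mul_of_nonneg_left hnum (exp_pos _).le).trans hexp
    _ ≤ 2 / (1 + v ^ 2) :=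
        div_le_div_of_nonneg_left zero_le_two (by positivity) (by nlinarith [sq_nonneg v])
    _ = 2 * (1 + v ^ 2)⁻¹ := div_eq_mul_inv _ _

lemma norm_integrandDeriv_le {b c : ℝ} (hcb : c ≤ b) (v : ℝ) :
    ‖integrandDeriv b v‖ ≤ (1 + |v|) * exp (-c * v ^ 2) := by
  have hnum : |v ^ 2 * cos (b * v) - (v + 2 * v ^ 3) * sin (b * v)| ≤
      (1 + |v|) * (4 * v ^ 2 + 1) :=
    calc |v ^ 2 * cos (b * v) - (v + 2 * v ^ 3) * sin (b * v)|
        ≤ |v ^ 2 * cos (b * v)| + |v * (1 + 2 * v ^ 2) * sin (b * v)| := by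
          rw [show v + 2 * v ^ 3 = v * (1 + 2 * v ^ 2) by ring]
          exact abs_sub _ _
      _ = v ^ 2 * |cos (b * v)| + |v| * (1 + 2 * v ^ 2) * |sin (b * v)| := by
          rw [abs_mul, abs_mul, abs_mul, abs_of_nonneg (sq_nonneg v),
            abs_of_pos (by positivity : 0 < 1 + 2 * v ^ 2)]
      _ ≤ v ^ 2 * 1 + |v| * (1 + 2 * v ^ 2) * 1 := by
          gcongr; exacts [abs_cos_le_one _, abs_sin_le_one _]
      _ ≤ (1 + |v|) * (4 * v ^ 2 + 1) := by nlinarith [abs_nonneg v, sq_nonneg v]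
  calc ‖integrandDeriv b v‖
      = exp (-b * v ^ 2) * |v ^ 2 * cos (b * v) - (v + 2 * v ^ 3) * sin (b * v)| /
          (4 * v ^ 2 + 1) := by
        rw [integrandDeriv, norm_div, norm_mul, norm_of_nonneg (exp_pos _).le, Real.norm_eq_abs,
          norm_of_nonneg (by positivity)]
    _ ≤ exp (-c * v ^ 2) * ((1 + |v|) * (4 * v ^ 2 + 1)) / (4 * v ^ 2 + 1) := by gcongr
    _ = (1 + |v|) * exp (-c * v ^ 2) := by field_simp

lemma hasDerivAt_integrand (b v : ℝ) : HasDerivAt (integrand · v) (integrandDeriv b v) b := by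
  have hexp : HasDerivAt (fun b => exp (-b * v ^ 2)) (exp (-b * v ^ 2) * -v ^ 2) b := by
    simpa using ((hasDerivAt_id b).neg.mul_const (v ^ 2)).exp
  have hmul : HasDerivAt (· * v) v b := by simpa using (hasDerivAt_id b).mul_const v
  refine ((hexp.mul (hmul.cos.add (hmul.sin.const_mul (2 * v)))).div_const _).congr_deriv ?_
  simp only [integrandDeriv, Pi.add_apply]
  ring

lemma four_mul_integrandDeriv_add_integrand (b v : ℝ) :
    4 * integrandDeriv b v + integrand b v =
      exp (-b * v ^ 2) * (cos (b * v) - 2 * v * sin (b * v)) := by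
  rw [integrandDeriv, integrand]
  field_simp
  ring

lemma integrable_integrand {b : ℝ} (hb : 0 ≤ b) : Integrable (integrand b) :=
  (integrable_inv_one_add_sq.const_mul 2).mono'
    (continuous_integrand b).aestronglyMeasurable
    (ae_of_all _ (norm_integrand_le hb))

lemma integrable_integrandDeriv {b : ℝ} (hb : 0 < b) : Integrable (integrandDeriv b) :=
  (integrable_one_add_abs_mul_exp_neg_mul_sq hb).mono'
    (continuous_integrandDeriv b).aestronglyMeasurable
    (ae_of_all _ (norm_integrandDeriv_le le_rfl))

lemma integral_integrandDeriv {b : ℝ} (hb : 0 < b) :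
    ∫ v in Ioi 0, integrandDeriv b v = -(1 / 4) * ∫ v in Ioi 0, integrand b v := by
  have hsum : ∫ v in Ioi 0, (4 * integrandDeriv b v + integrand b v) = 0 := by
    have h : ∀ v, 4 * integrandDeriv b v + integrand b v =
        b⁻¹ * (exp (-b * v ^ 2) * (b * cos (b * v) - 2 * b * v * sin (b * v))) := fun v => by
      rw [four_mul_integrandDeriv_add_integrand]
      field_simp
    simp_rw [h, integral_const_mul, integral_Ioi_deriv_exp_neg_mul_sq_mul_sin hb, mul_zero]
  rw [integral_add ((integrable_integrandDeriv hb).integrableOn.const_mul 4)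
    (integrable_integrand hb.le).integrableOn, integral_const_mul] at hsum
  linarith

lemma hasDerivAt_integral_integrand {b : ℝ} (hb : 0 < b) :
    HasDerivAt (fun b => ∫ v in Ioi 0, integrand b v)
      (-(1 / 4) * ∫ v in Ioi 0, integrand b v) b := by
  rw [← integral_integrandDeriv hb]
  exact (hasDerivAt_integral_of_dominated_loc_of_deriv_le
    (bound := fun v => (1 + |v|) * exp (-(b / 2) * v ^ 2)) (Ioi_mem_nhds (half_lt_self hb))
    (Eventually.of_forall fun x => (continuous_integrand x).aestronglyMeasurable)
    (integrable_integrand hb.le).integrableOn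
    (continuous_integrandDeriv b).aestronglyMeasurable
    (ae_of_all _ fun v x hx => norm_integrandDeriv_le (le_of_lt hx) v)
    (integrable_one_add_abs_mul_exp_neg_mul_sq (half_pos hb)).integrableOn
    (ae_of_all _ fun v x _ => hasDerivAt_integrand x v)).2

lemma continuousOn_integral_integrand :
    ContinuousOn (fun b => ∫ v in Ioi 0, integrand b v) (Ici 0) :=
  continuousOn_of_dominated
    (fun b _ => (continuous_integrand b).aestronglyMeasurable)
    (fun _ hb => ae_of_all _ (norm_integrand_le hb))
    (integrable_inv_one_add_sq.const_mul 2).integrableOn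
    (ae_of_all _ fun _ =>
      (continuous_uncurry_integrand.comp (continuous_id.prodMk continuous_const)).continuousOn)

lemma integral_integrand_zero : ∫ v in Ioi 0, integrand 0 v = π / 4 := by
  have h : ∀ v, integrand 0 v = (1 + (2 * v) ^ 2)⁻¹ := fun v => by
    simp [integrand]
    ring
  simp_rw [h]
  rw [integral_comp_mul_left_Ioi (fun x => (1 + x ^ 2)⁻¹) 0 two_pos, mul_zero,
    integral_Ioi_inv_one_add_sq, arctan_zero, smul_eq_mul]
  ring

end ExpCosSinIntegral

open ExpCosSinIntegral

theorem integral_exp_cos_sin_div_quadratic (b : ℝ) (hb : 0 ≤ b) :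
    ∫ v in Set.Ioi (0 : ℝ),
      Real.exp (-b * v ^ 2) * (Real.cos (b * v) + 2 * v * Real.sin (b * v)) / (4 * v ^ 2 + 1)
      = (Real.pi / 4) * Real.exp (-b / 4) := by
  change ∫ v in Ioi 0, integrand b v = _
  rw [eq_exp_mul_of_hasDerivAt_eq_neg_mul continuousOn_integral_integrand
    (fun _ hx => hasDerivAt_integral_integrand hx) hb, integral_integrand_zero]
  ring_nf
end

section
/- For positive reals a, b, ∫_{−∞}^{∞} (3 a x − 2 b) x / ( (a² x⁴ + (a x − b)²)(4 x² + 1) ) dx = 2 a π / (a² + 16 b²). -/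
open Real MeasureTheory Filter Topology
open Complex (I arg slitPlane)

/-!
The integrand has the elementary primitive
`(2b (log (a²x⁴ + (ax - b)²) - 2 log (4x² + 1)) + 2a arctan 2x + a θ(x)) / (a² + 16b²)`,
where `θ(x) = arg (ax² + (ax - b) i)` is the branch of `arctan ((ax - b) / (ax²))` that is
continuous across `x = 0`: for `a > 0` and `b ≠ 0` the point `ax² + (ax - b) i` never leaves
the slit plane.
Substituting `u = 1/x` shows that the logarithmic term tends to `log (a²/16)` and `θ` to `0` at
both ends, so only `arctan 2x` contributes, with total variation `π`.
-/

theorem ContinuousAt.tendsto_cocompact_of_eq_comp_inv {α : Type*} [TopologicalSpace α] {f g : ℝ → α}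
    (hg : ContinuousAt g 0) (hfg : ∀ x ≠ 0, f x = g x⁻¹) :
    Tendsto f (cocompact ℝ) (𝓝 (g 0)) := by
  rw [← Metric.cobounded_eq_cocompact]
  refine (hg.tendsto.comp tendsto_inv₀_cobounded).congr' ?_
  filter_upwards [tendsto_inv₀_cobounded'.eventually self_mem_nhdsWithin] with x hx
  exact (hfg x (by simpa using hx)).symm

theorem integrable_of_tendsto_one_add_sq_mul {f : ℝ → ℝ} (hf : Continuous f) {c : ℝ}
    (h : Tendsto (fun x => (1 + x ^ 2) * f x) (cocompact ℝ) (𝓝 c)) : Integrable f := by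
  refine hf.locallyIntegrable.integrable_of_isBigO_cocompact (g := fun x => (1 + x ^ 2)⁻¹) ?_
    (integrable_inv_one_add_sq.integrableAtFilter _)
  refine ((h.isBigO_one ℝ).mul (Asymptotics.isBigO_refl (fun x => (1 + x ^ 2)⁻¹) _)).congr
    (fun x => ?_) (fun x => one_mul _)
  field_simp

theorem HasDerivAt.carg_real {p : ℝ → ℂ} {p' : ℂ} {x : ℝ} (hp : HasDerivAt p p' x)
    (hx : p x ∈ slitPlane) : HasDerivAt (fun t => arg (p t)) (p' / p x).im x := by
  simpa [Function.comp_def, Complex.log_im] using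
    Complex.imCLM.hasFDerivAt.comp_hasDerivAt x (hp.clog_real hx)

variable {a b : ℝ}

theorem sq_mul_pow_four_add_sub_sq_pos (hb : b ≠ 0) (x : ℝ) :
    0 < a ^ 2 * x ^ 4 + (a * x - b) ^ 2 := by
  rcases eq_or_ne (a * x) b with h | h
  · obtain ⟨ha, hx⟩ : a ≠ 0 ∧ x ≠ 0 := by
      constructor <;> rintro rfl <;> simp_all [eq_comm]
    rw [h, sub_self]
    positivity
  · have := sub_ne_zero.2 h
    positivity

noncomputable def primitive (a b x : ℝ) : ℝ :=
  (2 * b * (Real.log (a ^ 2 * x ^ 4 + (a * x - b) ^ 2) - 2 * Real.log (4 * x ^ 2 + 1))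
    + 2 * a * arctan (2 * x) + a * arg (↑(a * x ^ 2) + ↑(a * x - b) * I)) / (a ^ 2 + 16 * b ^ 2)

theorem hasDerivAt_primitive (ha : 0 < a) (hb : b ≠ 0) (x : ℝ) :
    HasDerivAt (primitive a b)
      ((3 * a * x - 2 * b) * x / ((a ^ 2 * x ^ 4 + (a * x - b) ^ 2) * (4 * x ^ 2 + 1))) x := by
  have hD := sq_mul_pow_four_add_sub_sq_pos (a := a) hb x
  have hQ : 0 < 4 * x ^ 2 + 1 := by positivity
  have hslit : (↑(a * x ^ 2) + ↑(a * x - b) * I : ℂ) ∈ slitPlane := by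
    rw [Complex.mem_slitPlane_iff]
    rcases eq_or_ne x 0 with rfl | hx
    · simpa using hb
    · left
      simp [-Complex.ofReal_pow]
      positivity
  have hlin : HasDerivAt (fun t => a * t - b) a x := by
    simpa using ((hasDerivAt_id x).const_mul a).sub_const b
  have hsq : HasDerivAt (fun t => a * t ^ 2) (a * (2 * x)) x := by
    simpa using (hasDerivAt_pow 2 x).const_mul a
  have hDd : HasDerivAt (fun t => a ^ 2 * t ^ 4 + (a * t - b) ^ 2)
      (a ^ 2 * (4 * x ^ 3) + 2 * (a * x - b) * a) x := by
    simpa using ((hasDerivAt_pow 4 x).const_mul (a ^ 2)).fun_add (hlin.fun_pow 2)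
  have hQd : HasDerivAt (fun t => 4 * t ^ 2 + 1) (4 * (2 * x)) x := by
    simpa using ((hasDerivAt_pow 2 x).const_mul 4).add_const 1
  have hp : HasDerivAt (fun t : ℝ => (↑(a * t ^ 2) + ↑(a * t - b) * I : ℂ))
      (↑(a * (2 * x)) + ↑a * I) x :=
    hsq.ofReal_comp.add (hlin.ofReal_comp.mul_const I)
  have harctan : HasDerivAt (fun t => arctan (2 * t)) (1 / (1 + (2 * x) ^ 2) * 2) x := by
    simpa using ((hasDerivAt_id x).const_mul 2).arctan
  have hM : a ^ 2 + 16 * b ^ 2 ≠ 0 := by positivity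
  refine ((((((hDd.log hD.ne').sub ((hQd.log hQ.ne').const_mul 2)).const_mul (2 * b)).add
    (harctan.const_mul (2 * a))).add ((hp.carg_real hslit).const_mul a)).div_const
    (a ^ 2 + 16 * b ^ 2)).congr_deriv ?_
  simp only [Complex.div_im, Complex.normSq_apply, Complex.add_re, Complex.add_im,
    Complex.mul_re, Complex.mul_im, Complex.ofReal_re, Complex.ofReal_im, Complex.I_re,
    Complex.I_im, mul_zero, mul_one, sub_zero, zero_add, add_zero]
  rw [show a * x ^ 2 * (a * x ^ 2) + (a * x - b) * (a * x - b) = a ^ 2 * x ^ 4 + (a * x - b) ^ 2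
    by ring]
  field_simp
  ring

theorem tendsto_log_sub_two_mul_log_cocompact (ha : a ≠ 0) (hb : b ≠ 0) :
    Tendsto (fun x => Real.log (a ^ 2 * x ^ 4 + (a * x - b) ^ 2) - 2 * Real.log (4 * x ^ 2 + 1))
      (cocompact ℝ) (𝓝 (Real.log (a ^ 2 / 16))) := by
  have hg : ContinuousAt (fun u => (a ^ 2 + (a * u - b * u ^ 2) ^ 2) / (4 + u ^ 2) ^ 2) 0 :=
    ContinuousAt.div (by fun_prop) (by fun_prop) (by norm_num)
  have hquot : Tendsto (fun x => (a ^ 2 * x ^ 4 + (a * x - b) ^ 2) / (4 * x ^ 2 + 1) ^ 2)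
      (cocompact ℝ) (𝓝 (a ^ 2 / 16)) := by
    convert hg.tendsto_cocompact_of_eq_comp_inv fun x hx => ?_ using 2
    · norm_num
    · have := sq_mul_pow_four_add_sub_sq_pos (a := a) hb x
      field_simp
  refine (hquot.log (by positivity)).congr fun x => ?_
  rw [Real.log_div (sq_mul_pow_four_add_sub_sq_pos hb x).ne' (by positivity), Real.log_pow]
  norm_num

theorem tendsto_arg_cocompact (ha : 0 < a) :
    Tendsto (fun x : ℝ => arg (↑(a * x ^ 2) + ↑(a * x - b) * I)) (cocompact ℝ) (𝓝 0) := by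
  have hg : ContinuousAt (fun u : ℝ => arg (↑a + ↑(a * u - b * u ^ 2) * I)) 0 := by
    refine (Complex.continuousAt_arg ?_).comp (by fun_prop)
    simpa [Complex.mem_slitPlane_iff] using ha
  convert hg.tendsto_cocompact_of_eq_comp_inv fun x hx => ?_ using 2
  · simp [Complex.arg_ofReal_of_nonneg ha.le]
  · conv_rhs => rw [← Complex.arg_real_mul _ (by positivity : 0 < x ^ 2)]
    have hx' : (x : ℂ) ≠ 0 := by exact_mod_cast hx
    congr 1
    push_cast
    field_simp

theorem integrable_integrand (ha : a ≠ 0) (hb : b ≠ 0) :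
    Integrable fun x : ℝ =>
      (3 * a * x - 2 * b) * x / ((a ^ 2 * x ^ 4 + (a * x - b) ^ 2) * (4 * x ^ 2 + 1)) := by
  have hQ (x : ℝ) : 0 < 4 * x ^ 2 + 1 := by positivity
  refine integrable_of_tendsto_one_add_sq_mul (c := 0) (Continuous.div (by fun_prop) (by fun_prop)
    fun x => (mul_pos (sq_mul_pow_four_add_sub_sq_pos hb x) (hQ x)).ne') ?_
  have hg : ContinuousAt (fun u => (u ^ 4 + u ^ 2) * (3 * a - 2 * b * u) /
      ((a ^ 2 + (a * u - b * u ^ 2) ^ 2) * (4 + u ^ 2))) 0 :=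
    ContinuousAt.div (by fun_prop) (by fun_prop) (by simpa using ha)
  convert hg.tendsto_cocompact_of_eq_comp_inv fun x hx => ?_ using 2
  · simp
  · have := sq_mul_pow_four_add_sub_sq_pos (a := a) hb x
    have := hQ x
    field_simp

theorem tendsto_primitive (ha : 0 < a) (hb : b ≠ 0) {l : Filter ℝ} (hl : l ≤ cocompact ℝ) {c : ℝ}
    (hc : Tendsto (fun x => arctan (2 * x)) l (𝓝 c)) :
    Tendsto (primitive a b) l
      (𝓝 ((2 * b * Real.log (a ^ 2 / 16) + 2 * a * c) / (a ^ 2 + 16 * b ^ 2))) := by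
  have := (((((tendsto_log_sub_two_mul_log_cocompact ha.ne' hb).mono_left
    hl).const_mul (2 * b)).add (hc.const_mul (2 * a))).add
    (((tendsto_arg_cocompact (b := b) ha).mono_left hl).const_mul a)).div_const (a ^ 2 + 16 * b ^ 2)
  rwa [mul_zero, add_zero] at this

theorem integral_rational_identity (a b : ℝ) (ha : 0 < a) (hb : 0 < b) :
    ∫ x : ℝ,
      (3 * a * x - 2 * b) * x /
        ((a ^ 2 * x ^ 4 + (a * x - b) ^ 2) * (4 * x ^ 2 + 1))
      = 2 * a * Real.pi / (a ^ 2 + 16 * b ^ 2) := by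
  have hdouble_atTop : Tendsto (fun x : ℝ => 2 * x) atTop atTop :=
    tendsto_id.const_mul_atTop two_pos
  have hdouble_atBot : Tendsto (fun x : ℝ => 2 * x) atBot atBot :=
    tendsto_id.const_mul_atBot two_pos
  rw [integral_of_hasDerivAt_of_tendsto (hasDerivAt_primitive ha hb.ne')
    (integrable_integrand ha.ne' hb.ne')
    (tendsto_primitive ha hb.ne' atBot_le_cocompact
      ((tendsto_arctan_atBot.mono_right nhdsWithin_le_nhds).comp hdouble_atBot))
    (tendsto_primitive ha hb.ne' atTop_le_cocompact
      ((tendsto_arctan_atTop.mono_right nhdsWithin_le_nhds).comp hdouble_atTop))]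
  field_simp
  ring
end

section
/- For a > 1/2 and a positive integer k with b = a + k, the series identity holds: Σ_{n=0}^{∞} (−1)^{n} / ∏_{j=0}^{k−1} (a + j − n²) = (1/2)·Γ(a)/Γ(a+k) + (π/(2(k−1)!)) Σ_{n=0}^{k−1} (−1)^{n} C(k−1,n) csc(π√(a+n)) / √(a+n), provided a + j − n² ≠ 0 for all n ≥ 0, 0 ≤ j ≤ k−1, and √(a+n) is never an integer for 0 ≤ n ≤ k−1. -/
open Real Finset
open scoped Nat

/-!
Expanding `1 / ∏_{j<k} (a + j - x)` in partial fractions in `x` splits the series into `k` series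
`∑ₘ (-1)ᵐ / (z² - m²)` with `z = √(a + n)`. Each of these is the Mittag-Leffler expansion
`1 / (2 z²) + π / (2 z sin (π z))`, obtained from the expansion of the cotangent through
`csc θ = cot (θ / 2) - cot θ`. By the same partial fractions at `x = 0`, the terms `1 / (2 z²)`
add up to `Γ(a) / (2 Γ(a + k))`.
-/

namespace Complex

lemma cot_sub_cot_two_mul {w : ℂ} (hw : sin (2 * w) ≠ 0) :
    cot w - cot (2 * w) = 1 / sin (2 * w) := by
  rw [sin_two_mul] at hw ⊢
  have hs : sin w ≠ 0 := fun h => hw (by simp [h])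
  have hc : cos w ≠ 0 := fun h => hw (by simp [h])
  rw [cot_eq_cos_div_sin, cot_eq_cos_div_sin, sin_two_mul, cos_two_mul]
  field_simp
  ring

lemma div_two_mem_integerComplement {x : ℂ} (hx : x ∈ integerComplement) :
    x / 2 ∈ integerComplement := by
  rintro ⟨n, hn⟩
  exact hx ⟨2 * n, by push_cast; rw [hn]; ring⟩

lemma hasSum_one_div_sq_sub_sq {x : ℂ} (hx : x ∈ integerComplement) :
    HasSum (fun m : ℕ => 1 / (x ^ 2 - m ^ 2)) (1 / (2 * x ^ 2) + π * cot (π * x) / (2 * x)) := by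
  have hx0 := integerComplement.ne_zero hx
  have hcot : HasSum (fun n => cotTerm x n) (π * cot (π * x) - 1 / x) :=
    (summable_cotTerm hx).hasSum_iff_tendsto_nat.mpr (tendsto_logDeriv_euler_cot_sub hx)
  have hterm (n : ℕ) : cotTerm x n / (2 * x) = 1 / (x ^ 2 - ((n + 1 : ℕ) : ℂ) ^ 2) := by
    have h₁ := integerComplement_add_ne_zero hx (n + 1)
    have h₂ := integerComplement_add_ne_zero hx (-(n + 1))
    have h₃ : x ^ 2 - (n + 1) ^ 2 ≠ 0 := by
      simpa [sub_eq_zero] using integerComplement_pow_two_ne_pow_two hx (n + 1)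
    push_cast at h₁ h₂ ⊢
    rw [← sub_eq_add_neg] at h₂
    rw [cotTerm_identity hx]
    field_simp
    ring
  rw [← hasSum_nat_add_iff' 1, show 1 / (2 * x ^ 2) + π * cot (π * x) / (2 * x) -
      ∑ i ∈ range 1, 1 / (x ^ 2 - (i : ℂ) ^ 2) = (π * cot (π * x) - 1 / x) / (2 * x) by
    simp only [range_one, sum_singleton, CharP.cast_eq_zero]
    field_simp
    ring]
  simpa only [hterm] using hcot.div_const (2 * x)

lemma hasSum_one_div_sq_sub_two_mul_sq {x : ℂ} (hx : x ∈ integerComplement) :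
    HasSum (fun m : ℕ => 1 / (x ^ 2 - ((2 * m : ℕ) : ℂ) ^ 2))
      (1 / (2 * x ^ 2) + π * cot (π * (x / 2)) / (4 * x)) := by
  have hx0 := integerComplement.ne_zero hx
  have h := (hasSum_one_div_sq_sub_sq (div_two_mem_integerComplement hx)).div_const 4
  rw [show (1 / (2 * (x / 2) ^ 2) + π * cot (π * (x / 2)) / (2 * (x / 2))) / 4 =
    1 / (2 * x ^ 2) + π * cot (π * (x / 2)) / (4 * x) by field_simp; ring] at h
  refine h.congr_fun fun m => ?_
  push_cast
  rw [div_div]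
  congr 1
  ring

theorem hasSum_neg_one_pow_div_sq_sub_sq {x : ℂ} (hx : x ∈ integerComplement) :
    HasSum (fun m : ℕ => (-1) ^ m / (x ^ 2 - m ^ 2))
      (1 / (2 * x ^ 2) + π / (2 * x * sin (π * x))) := by
  have hall := hasSum_one_div_sq_sub_sq hx
  have heven := hasSum_one_div_sq_sub_two_mul_sq hx
  obtain ⟨O, hodd⟩ := hall.summable.comp_injective (i := fun k : ℕ => 2 * k + 1)
    fun i j h => by simpa using h
  -- `∑ (-1)ᵐ vₘ = ∑ v₂ₘ - ∑ v₂ₘ₊₁ = 2 ∑ v₂ₘ - ∑ vₘ` for `vₘ = 1 / (x² - m²)`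
  have hO := hall.unique (HasSum.even_add_odd (f := fun m : ℕ => 1 / (x ^ 2 - m ^ 2)) heven hodd)
  have halt := HasSum.even_add_odd (f := fun m : ℕ => (-1) ^ m / (x ^ 2 - m ^ 2))
    (heven.congr_fun fun k => by simp [pow_mul])
    (hodd.neg.congr_fun fun k => by simp [pow_succ, pow_mul, neg_div])
  have hcsc : cot (π * (x / 2)) - cot (π * x) = 1 / sin (π * x) := by
    have hsin := sin_pi_mul_ne_zero hx
    rw [show π * x = 2 * (π * (x / 2)) by ring] at hsin ⊢
    exact cot_sub_cot_two_mul hsin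
  convert halt using 1
  linear_combination (-1 : ℂ) * hO - (π / (2 * x)) * hcsc

end Complex

theorem Real.hasSum_neg_one_pow_div_sq_sub_sq {z : ℝ} (hz : ∀ m : ℤ, z ≠ m) :
    HasSum (fun m : ℕ => (-1) ^ m / (z ^ 2 - m ^ 2))
      (1 / (2 * z ^ 2) + π / (2 * z * sin (π * z))) := by
  have hz' : (z : ℂ) ∈ Complex.integerComplement := by
    rintro ⟨m, hm⟩
    exact hz m (by exact_mod_cast hm.symm)
  rw [← Complex.hasSum_ofReal]
  push_cast
  exact Complex.hasSum_neg_one_pow_div_sq_sub_sq hz'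

theorem factorial_div_prod_range_add {K : Type*} [Field K] [CharZero K] (k : ℕ) {y : K}
    (hy : ∀ j ≤ k, y + j ≠ 0) :
    k ! / ∏ j ∈ range (k + 1), (y + j) = ∑ n ∈ range (k + 1), (-1) ^ n * k.choose n / (y + n) := by
  induction k generalizing y with
  | zero => simp
  | succ k ih =>
    have hy' : ∀ j ≤ k, y + 1 + j ≠ 0 := fun j hj => by
      simpa [add_assoc, add_comm (1 : K)] using hy (j + 1) (by omega)
    have hpascal : ∑ n ∈ range (k + 2), (-1) ^ n * ((k + 1).choose n : K) / (y + n) =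
        ∑ n ∈ range (k + 1), (-1) ^ n * (k.choose n : K) / (y + n) -
          ∑ n ∈ range (k + 1), (-1) ^ n * (k.choose n : K) / (y + 1 + n) := by
      rw [sub_eq_add_neg, ← sum_neg_distrib]
      convert sum_choose_succ_mul (fun i _ => (-1 : K) ^ i / (y + i)) k using 1
      · exact sum_congr rfl fun n _ => by ring
      · congr 1 <;> refine sum_congr rfl fun n _ => ?_ <;> push_cast <;> ring
    have hQ : ∏ j ∈ range k, (y + 1 + j) ≠ 0 :=
      prod_ne_zero_iff.mpr fun j hj => hy' j (by simp at hj; omega)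
    have hy0 : y ≠ 0 := by simpa using hy 0 (by omega)
    have hyk : y + 1 + k ≠ 0 := hy' k le_rfl
    have hyk' : y + (k + 1) ≠ 0 := by exact_mod_cast hy (k + 1) le_rfl
    have hprod : ∏ j ∈ range (k + 1), (y + j) = y * ∏ j ∈ range k, (y + 1 + j) := by
      rw [prod_range_succ', mul_comm]
      simp [add_assoc, add_comm (1 : K)]
    rw [hpascal, ← ih (fun j hj => hy j (by omega)), ← ih hy', prod_range_succ _ (k + 1), hprod,
      prod_range_succ, Nat.factorial_succ]
    push_cast
    field_simp
    ring

theorem one_div_prod_range_add_sub_eq_sum {K : Type*} [Field K] [CharZero K] (k : ℕ) {a x : K}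
    (hx : ∀ j ≤ k, a + j - x ≠ 0) :
    1 / ∏ j ∈ range (k + 1), (a + j - x) =
      ∑ n ∈ range (k + 1), (-1) ^ n * k.choose n / k ! * (1 / (a + n - x)) := by
  have h := factorial_div_prod_range_add k (y := a - x) fun j hj => by
    rw [sub_add_eq_add_sub]; exact hx j hj
  simp only [sub_add_eq_add_sub] at h
  calc 1 / ∏ j ∈ range (k + 1), (a + j - x) = (k ! / ∏ j ∈ range (k + 1), (a + j - x)) / k ! := by
        rw [div_right_comm, div_self (Nat.cast_ne_zero.mpr k.factorial_ne_zero)]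
    _ = _ := by
        rw [h, sum_div]
        exact sum_congr rfl fun n _ => by ring

theorem tsum_neg_one_pow_div_prod_range {a : ℝ} (ha : 0 ≤ a) (k : ℕ)
    (hne : ∀ m : ℕ, ∀ j ≤ k, a + j - (m : ℝ) ^ 2 ≠ 0)
    (hirr : ∀ n ≤ k, ∀ m : ℤ, √(a + n) ≠ m) :
    ∑' m : ℕ, (-1) ^ m / ∏ j ∈ range (k + 1), (a + j - (m : ℝ) ^ 2) =
      ∑ n ∈ range (k + 1), (-1) ^ n * k.choose n / k ! *
        (1 / (2 * (a + n)) + π / (2 * √(a + n) * sin (π * √(a + n)))) := by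
  have hseries (n : ℕ) (hn : n ≤ k) : HasSum (fun m : ℕ => (-1) ^ m / (a + n - m ^ 2))
      (1 / (2 * (a + n)) + π / (2 * √(a + n) * sin (π * √(a + n)))) := by
    have h := Real.hasSum_neg_one_pow_div_sq_sub_sq (hirr n hn)
    rwa [sq_sqrt (by positivity)] at h
  rw [← (hasSum_sum fun n hn => (hseries n (by simpa [Nat.lt_succ_iff] using hn)).mul_left
    ((-1) ^ n * k.choose n / k ! : ℝ)).tsum_eq]
  refine tsum_congr fun m => ?_
  rw [div_eq_mul_one_div, one_div_prod_range_add_sub_eq_sum k (hne m), mul_sum]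
  exact sum_congr rfl fun n _ => by ring

theorem Real.Gamma_add_nat_eq_mul_prod {a : ℝ} (k : ℕ) (ha : ∀ j < k, a + j ≠ 0) :
    Gamma (a + k) = Gamma a * ∏ j ∈ range k, (a + j) := by
  induction k with
  | zero => simp
  | succ k ih =>
    rw [Nat.cast_succ, ← add_assoc, Gamma_add_one (ha k (by omega)),
      ih fun j hj => ha j (by omega), prod_range_succ]
    ring

theorem gamma_ratio_series (a : ℝ) (ha : 1/2 < a) (k : ℕ) (hk : 1 ≤ k)
    (hne : ∀ n : ℕ, ∀ j < k, a + j - (n : ℝ) ^ 2 ≠ 0)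
    (hirr : ∀ n < k, ¬∃ m : ℤ, Real.sqrt (a + n) = m) :
    ∑' n : ℕ, (-1 : ℝ) ^ n / ∏ j ∈ Finset.range k, (a + j - (n : ℝ) ^ 2)
      = (1 / 2) * Real.Gamma a / Real.Gamma (a + k) +
        (Real.pi / (2 * ((k - 1).factorial : ℝ))) *
          ∑ n ∈ Finset.range k,
            (-1 : ℝ) ^ n * ((k - 1).choose n : ℝ) *
              (1 / Real.sin (Real.pi * Real.sqrt (a + n))) / Real.sqrt (a + n) := by
  obtain ⟨k, rfl⟩ := Nat.exists_eq_add_of_le' hk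
  have ha0 : 0 < a := by linarith
  have hpos (n : ℕ) : 0 < a + n := add_pos_of_pos_of_nonneg ha0 n.cast_nonneg
  have hconst := one_div_prod_range_add_sub_eq_sum k (a := a) (x := 0) fun j _ => by
    simpa using (hpos j).ne'
  simp only [sub_zero] at hconst
  rw [Nat.add_sub_cancel,
    tsum_neg_one_pow_div_prod_range ha0.le k (fun m j hj => hne m j (by omega))
      (fun n hn m hm => hirr n (by omega) ⟨m, hm⟩),
    Real.Gamma_add_nat_eq_mul_prod (k + 1) fun j _ => (hpos j).ne', mul_comm (Gamma a),
    mul_div_mul_right _ _ (Gamma_pos_of_pos ha0).ne', div_eq_mul_one_div, hconst,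
    mul_sum, mul_sum, ← sum_add_distrib]
  refine sum_congr rfl fun n _ => ?_
  simp only [one_div, mul_inv]
  ring
end
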